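/- The collection Z(M) of cyclic flats of a q-matroid M forms a lattice under inclusion with meet Z₁∧Z₂ = cyc(Z₁∩Z₂) and join Z₁∨Z₂ = cl(Z₁+Z₂). Moreover ρ(Z₁∨Z₂)=ρ(Z₁+Z₂), ρ(Z₁∧Z₂)=ρ(Z₁∩Z₂)−dim((Z₁∩Z₂)/(Z₁∧Z₂)), and ρ(Z₁)+ρ(Z₂) ≥ ρ(Z₁∨Z₂)+ρ(Z₁∧Z₂)+dim((Z₁∩Z₂)/(Z₁∧Z₂)). -/

import Mathlib

/-! `cl V` is the largest space whose addition leaves `ρ V` unchanged, so it is a flat of rank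
`ρ V` contained in every flat containing `V`; dually `cyc V` is the largest open space inside `V`.
The two are linked by circuit exchange: if adding `x` to `A` does not raise the rank, a circuit of
`A + ⟨x⟩` leaves `A` (take one inside `I + ⟨x⟩` for a maximal independent `I ≤ A`), hence
`x ∈ A + cyc (A + ⟨x⟩)`. Therefore `cl` preserves openness, `cyc` preserves flatness, and every
vector added on the way from `cyc V` up to `V` raises the rank by one, which gives
`ρ V = ρ (cyc V) + dim (V / cyc V)`. The rank inequality is then submodularity for `Z₁, Z₂`. -/

open Submodule Module

namespace QM

variable (F : Type*) {E : Type*} [Field F] [AddCommGroup E] [Module F E]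

/-- The rank axioms (R1)-(R3) of a q-matroid. -/
def IsRkFn (ρ : Submodule F E → ℕ) : Prop :=
  (∀ V : Submodule F E, ρ V ≤ finrank F V) ∧
  (∀ ⦃V W : Submodule F E⦄, V ≤ W → ρ V ≤ ρ W) ∧
  (∀ V W : Submodule F E, ρ (V ⊔ W) + ρ (V ⊓ W) ≤ ρ V + ρ W)

variable {F}

/-- Independent spaces. -/
def Indep (ρ : Submodule F E → ℕ) (V : Submodule F E) : Prop := ρ V = finrank F V

/-- Circuits: dependent spaces all of whose proper subspaces are independent. -/
def IsCircuit (ρ : Submodule F E → ℕ) (C : Submodule F E) : Prop :=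
  ¬ Indep ρ C ∧ ∀ D : Submodule F E, D < C → Indep ρ D

/-- Open spaces: sums of circuits. -/
def IsOpenSp (ρ : Submodule F E → ℕ) (V : Submodule F E) : Prop :=
  ∃ S : Set (Submodule F E), (∀ C ∈ S, IsCircuit ρ C) ∧ V = sSup S

/-- The cyclic core: the sum of all circuits contained in `V`. -/
def cyc (ρ : Submodule F E → ℕ) (V : Submodule F E) : Submodule F E :=
  sSup {C : Submodule F E | IsCircuit ρ C ∧ C ≤ V}

/-- The closure operator: the sum of all `⟨x⟩` with `ρ(V + ⟨x⟩) = ρ V`. -/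
def cl (ρ : Submodule F E → ℕ) (V : Submodule F E) : Submodule F E :=
  sSup {W : Submodule F E | ∃ x : E, ρ (V ⊔ span F {x}) = ρ V ∧ W = span F {x}}

/-- Flats. -/
def IsFlat (ρ : Submodule F E → ℕ) (V : Submodule F E) : Prop :=
  ∀ x : E, x ∉ V → ρ V < ρ (V ⊔ span F {x})

/-- Cyclic flats. -/
def CyclicFlat (ρ : Submodule F E → ℕ) (V : Submodule F E) : Prop :=
  IsFlat ρ V ∧ IsOpenSp ρ V

end QM

namespace QM

section

variable {F E : Type*} [Field F] [AddCommGroup E] [Module F E] {ρ : Submodule F E → ℕ}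

namespace IsRkFn

variable (hρ : IsRkFn F ρ)
include hρ

theorem le_finrank (V : Submodule F E) : ρ V ≤ finrank F V := hρ.1 V

theorem mono {V W : Submodule F E} (h : V ≤ W) : ρ V ≤ ρ W := hρ.2.1 h

theorem submodular (V W : Submodule F E) : ρ (V ⊔ W) + ρ (V ⊓ W) ≤ ρ V + ρ W := hρ.2.2 V W

theorem rk_sup_le_add_finrank (V W : Submodule F E) : ρ (V ⊔ W) ≤ ρ V + finrank F W := by
  have := hρ.submodular V W
  have := hρ.le_finrank W
  omega

theorem rk_sup_span_le (V : Submodule F E) (x : E) : ρ (V ⊔ span F {x}) ≤ ρ V + 1 := by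
  have h := finrank_span_le_card (R := F) ({x} : Set E)
  simp only [Set.toFinset_singleton, Finset.card_singleton] at h
  have := hρ.rk_sup_le_add_finrank V (span F {x})
  omega

theorem rk_sup_span_eq_or (V : Submodule F E) (x : E) :
    ρ (V ⊔ span F {x}) = ρ V ∨ ρ (V ⊔ span F {x}) = ρ V + 1 := by
  have := hρ.mono (le_sup_left : V ≤ V ⊔ span F {x})
  have := hρ.rk_sup_span_le V x
  omega

theorem rk_sup_eq_of_le {V W U : Submodule F E} (hVW : V ≤ W) (h : ρ (V ⊔ U) = ρ V) :
    ρ (W ⊔ U) = ρ W := by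
  have hsub := hρ.submodular W (V ⊔ U)
  rw [← sup_assoc, sup_eq_left.mpr hVW] at hsub
  have := hρ.mono (le_inf hVW le_sup_left : V ≤ W ⊓ (V ⊔ U))
  have := hρ.mono (le_sup_left : W ≤ W ⊔ U)
  omega

theorem rk_bot : ρ (⊥ : Submodule F E) = 0 := by
  simpa using hρ.le_finrank ⊥

theorem rk_add_finrank_le_of_le [FiniteDimensional F E] {D V : Submodule F E} (hDV : D ≤ V) :
    ρ V + finrank F D ≤ ρ D + finrank F V := by
  obtain ⟨W, hW⟩ := D.exists_isCompl
  have hsup : D ⊔ W ⊓ V = V := by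
    rw [← sup_inf_assoc_of_le W hDV, hW.sup_eq_top, top_inf_eq]
  have hinf : D ⊓ (W ⊓ V) = ⊥ := by
    rw [← inf_assoc, hW.inf_eq_bot, bot_inf_eq]
  have hdim := Submodule.finrank_sup_add_finrank_inf_eq D (W ⊓ V)
  have := hρ.rk_sup_le_add_finrank D (W ⊓ V)
  rw [hsup, hinf, finrank_bot] at hdim
  rw [hsup] at this
  omega

end IsRkFn

theorem indep_bot (hρ : IsRkFn F ρ) : Indep ρ (⊥ : Submodule F E) := by
  simp [Indep, hρ.rk_bot]

theorem Indep.of_le [FiniteDimensional F E] (hρ : IsRkFn F ρ) {I D : Submodule F E}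
    (hI : Indep ρ I) (hDI : D ≤ I) : Indep ρ D := by
  have := hρ.rk_add_finrank_le_of_le hDI
  have := hρ.le_finrank D
  unfold Indep at hI ⊢
  omega

theorem exists_isCircuit_le_of_not_indep [FiniteDimensional F E] {V : Submodule F E}
    (hV : ¬ Indep ρ V) : ∃ C ≤ V, IsCircuit ρ C := by
  obtain ⟨C, ⟨hCV, hC⟩, hmin⟩ :=
    exists_minimal_of_wellFoundedLT (fun C => C ≤ V ∧ ¬ Indep ρ C) ⟨V, le_rfl, hV⟩
  refine ⟨C, hCV, hC, fun D hDC => ?_⟩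
  by_contra hD
  exact hDC.not_ge (hmin ⟨hDC.le.trans hCV, hD⟩ hDC.le)

theorem cyc_le (V : Submodule F E) : cyc ρ V ≤ V :=
  sSup_le fun _ hC => hC.2

theorem cyc_mono {V W : Submodule F E} (h : V ≤ W) : cyc ρ V ≤ cyc ρ W :=
  sSup_le_sSup fun _ hC => ⟨hC.1, hC.2.trans h⟩

theorem isOpenSp_cyc (V : Submodule F E) : IsOpenSp ρ (cyc ρ V) :=
  ⟨_, fun _ hC => hC.1, rfl⟩

theorem IsOpenSp.le_cyc {O V : Submodule F E} (hO : IsOpenSp ρ O) (hOV : O ≤ V) :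
    O ≤ cyc ρ V := by
  obtain ⟨S, hS, rfl⟩ := hO
  exact sSup_le fun C hC => le_sSup ⟨hS C hC, (le_sSup hC).trans hOV⟩

theorem IsOpenSp.sup {V W : Submodule F E} (hV : IsOpenSp ρ V) (hW : IsOpenSp ρ W) :
    IsOpenSp ρ (V ⊔ W) := by
  obtain ⟨S, hS, rfl⟩ := hV
  obtain ⟨T, hT, rfl⟩ := hW
  exact ⟨S ∪ T, fun C hC => hC.elim (hS C) (hT C), sSup_union.symm⟩

section Closure

variable [FiniteDimensional F E] (hρ : IsRkFn F ρ)
include hρ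

theorem isGreatest_cl (V : Submodule F E) : IsGreatest {W | ρ (V ⊔ W) = ρ V} (cl ρ V) := by
  obtain ⟨M, hM, hMmax⟩ :=
    exists_maximal_of_wellFoundedGT (fun W => ρ (V ⊔ W) = ρ V) ⟨⊥, congrArg ρ (sup_bot_eq V)⟩
  have hle : ∀ W, ρ (V ⊔ W) = ρ V → W ≤ M := fun W hW =>
    le_sup_right.trans <| hMmax (show ρ (V ⊔ (M ⊔ W)) = ρ V by
      rw [← sup_assoc, hρ.rk_sup_eq_of_le le_sup_left hW, hM]) le_sup_left
  suffices cl ρ V = M from this ▸ ⟨hM, hle⟩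
  refine le_antisymm (sSup_le ?_) fun m hm => ?_
  · rintro _ ⟨x, hx, rfl⟩
    exact hle _ hx
  · refine (le_sSup ⟨m, le_antisymm ?_ (hρ.mono le_sup_left), rfl⟩ : span F {m} ≤ cl ρ V)
      (mem_span_singleton_self m)
    exact hM ▸ hρ.mono (sup_le_sup_left ((span_singleton_le_iff_mem m M).mpr hm) V)

theorem le_cl (V : Submodule F E) : V ≤ cl ρ V :=
  (isGreatest_cl hρ V).2 (congrArg ρ (sup_idem V))

theorem rk_cl (V : Submodule F E) : ρ (cl ρ V) = ρ V := by
  simpa [sup_eq_right.mpr (le_cl hρ V)] using (isGreatest_cl hρ V).1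

theorem mem_cl_iff {V : Submodule F E} {x : E} : x ∈ cl ρ V ↔ ρ (V ⊔ span F {x}) = ρ V := by
  refine ⟨fun hx => le_antisymm ?_ (hρ.mono le_sup_left), fun hx => ?_⟩
  · exact (isGreatest_cl hρ V).1 ▸
      hρ.mono (sup_le_sup_left ((span_singleton_le_iff_mem _ _).mpr hx) V)
  · exact (span_singleton_le_iff_mem _ _).mp ((isGreatest_cl hρ V).2 hx)

theorem isFlat_iff {V : Submodule F E} : IsFlat ρ V ↔ cl ρ V ≤ V := by
  refine ⟨fun hV x hx => ?_, fun hV x hx => ?_⟩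
  · by_contra hxV
    exact (hV x hxV).ne' ((mem_cl_iff hρ).mp hx)
  · exact (hρ.mono le_sup_left).lt_of_ne fun h => hx (hV ((mem_cl_iff hρ).mpr h.symm))

theorem cl_le_of_isFlat {V W : Submodule F E} (hVW : V ≤ W) (hW : IsFlat ρ W) : cl ρ V ≤ W :=
  fun _ hx => (isFlat_iff hρ).mp hW
    ((mem_cl_iff hρ).mpr (hρ.rk_sup_eq_of_le hVW ((mem_cl_iff hρ).mp hx)))

theorem isFlat_cl (V : Submodule F E) : IsFlat ρ (cl ρ V) :=
  (isFlat_iff hρ).mpr fun _ hx => (mem_cl_iff hρ).mpr <| le_antisymm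
    ((hρ.mono (sup_le_sup_right (le_cl hρ V) _)).trans
      (((mem_cl_iff hρ).mp hx).trans (rk_cl hρ V)).le)
    (hρ.mono le_sup_left)

theorem IsFlat.inf {V W : Submodule F E} (hV : IsFlat ρ V) (hW : IsFlat ρ W) :
    IsFlat ρ (V ⊓ W) :=
  (isFlat_iff hρ).mpr (le_inf (cl_le_of_isFlat hρ inf_le_left hV)
    (cl_le_of_isFlat hρ inf_le_right hW))

end Closure

section Circuits

variable [FiniteDimensional F E] (hρ : IsRkFn F ρ)
include hρ

/-- A maximal independent subspace of `A` spans `A` up to closure, so it has the rank of `A`. -/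
theorem exists_indep_le_rk_eq (A : Submodule F E) : ∃ I ≤ A, Indep ρ I ∧ ρ I = ρ A := by
  obtain ⟨I, ⟨hIA, hI⟩, hmax⟩ :=
    exists_maximal_of_wellFoundedGT (fun I => I ≤ A ∧ Indep ρ I) ⟨⊥, bot_le, indep_bot hρ⟩
  have hAI : A ≤ cl ρ I := by
    intro a ha
    by_cases haI : a ∈ I
    · exact le_cl hρ I haI
    have hdep : ¬ Indep ρ (I ⊔ span F {a}) := fun h =>
      haI (hmax ⟨sup_le hIA ((span_singleton_le_iff_mem a A).mpr ha), h⟩ le_sup_left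
        (mem_sup_right (mem_span_singleton_self a)))
    rw [Indep, finrank_sup_span_singleton haI, ← hI] at hdep
    exact (mem_cl_iff hρ).mpr ((hρ.rk_sup_span_eq_or I a).resolve_right hdep)
  exact ⟨I, hIA, hI, le_antisymm (hρ.mono hIA) ((hρ.mono hAI).trans (rk_cl hρ I).le)⟩

theorem exists_isCircuit_le_sup_not_le {A : Submodule F E} {x : E} (hxA : x ∉ A)
    (h : ρ (A ⊔ span F {x}) = ρ A) : ∃ C ≤ A ⊔ span F {x}, IsCircuit ρ C ∧ ¬ C ≤ A := by
  obtain ⟨I, hIA, hI, hIrk⟩ := exists_indep_le_rk_eq hρ A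
  have hxI : x ∉ I := fun hx => hxA (hIA hx)
  have hdep : ¬ Indep ρ (I ⊔ span F {x}) := by
    have := hρ.mono (sup_le_sup_right hIA (span F {x}))
    rw [Indep, finrank_sup_span_singleton hxI]
    unfold Indep at hI
    omega
  obtain ⟨C, hCI, hC⟩ := exists_isCircuit_le_of_not_indep hdep
  refine ⟨C, hCI.trans (sup_le_sup_right hIA _), hC, fun hCA => hC.1 (hI.of_le hρ ?_)⟩
  have hinf : (I ⊔ span F {x}) ⊓ A = I := by
    rw [sup_inf_assoc_of_le _ hIA, inf_comm,
      disjoint_iff.mp (disjoint_span_singleton.mpr fun hx => absurd hx hxA), sup_bot_eq]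
  exact hinf ▸ le_inf hCI hCA

theorem mem_sup_cyc_of_rk_sup_eq {A : Submodule F E} {x : E}
    (h : ρ (A ⊔ span F {x}) = ρ A) : x ∈ A ⊔ cyc ρ (A ⊔ span F {x}) := by
  by_cases hxA : x ∈ A
  · exact mem_sup_left hxA
  obtain ⟨C, hCle, hC, hCA⟩ := exists_isCircuit_le_sup_not_le hρ hxA h
  obtain ⟨c, hcC, hcA⟩ := SetLike.not_le_iff_exists.mp hCA
  have hc : c ∈ span F (insert x (A : Set E)) := by
    rw [span_insert, span_eq, sup_comm]
    exact hCle hcC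
  have hx := mem_span_insert_exchange hc (by rwa [span_eq])
  rw [span_insert, span_eq, sup_comm] at hx
  have hcyc : span F {c} ≤ cyc ρ (A ⊔ span F {x}) :=
    ((span_singleton_le_iff_mem c C).mpr hcC).trans (le_sSup ⟨hC, hCle⟩)
  exact sup_le_sup_left hcyc A hx

theorem mem_of_rk_sup_span_eq {V W : Submodule F E} {x : E} (hVW : cyc ρ V ≤ W) (hWV : W ≤ V)
    (hxV : x ∈ V) (h : ρ (W ⊔ span F {x}) = ρ W) : x ∈ W := by
  have hcyc : cyc ρ (W ⊔ span F {x}) ≤ W :=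
    (cyc_mono (sup_le hWV ((span_singleton_le_iff_mem x V).mpr hxV))).trans hVW
  simpa [sup_eq_left.mpr hcyc] using mem_sup_cyc_of_rk_sup_eq hρ h

theorem IsFlat.cyc {V : Submodule F E} (hV : IsFlat ρ V) : IsFlat ρ (cyc ρ V) := by
  refine (isFlat_iff hρ).mpr fun x hx => ?_
  have h := (mem_cl_iff hρ).mp hx
  by_cases hxV : x ∈ V
  · exact mem_of_rk_sup_span_eq hρ le_rfl (cyc_le V) hxV h
  · exact absurd ((isFlat_iff hρ).mp hV ((mem_cl_iff hρ).mpr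
      (hρ.rk_sup_eq_of_le (cyc_le V) h))) hxV

theorem IsOpenSp.cl {O : Submodule F E} (hO : IsOpenSp ρ O) : IsOpenSp ρ (QM.cl ρ O) := by
  suffices QM.cl ρ O ≤ cyc ρ (QM.cl ρ O) from le_antisymm (cyc_le _) this ▸ isOpenSp_cyc _
  intro x hx
  refine sup_le (hO.le_cyc (le_cl hρ O)) (cyc_mono ?_)
    (mem_sup_cyc_of_rk_sup_eq hρ ((mem_cl_iff hρ).mp hx))
  exact sup_le (le_cl hρ O) ((span_singleton_le_iff_mem x _).mpr hx)

theorem rk_add_finrank_cyc (V : Submodule F E) :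
    ρ V + finrank F (cyc ρ V) = ρ (cyc ρ V) + finrank F V := by
  refine le_antisymm (hρ.rk_add_finrank_le_of_le (cyc_le V)) ?_
  suffices ∀ W, cyc ρ V ≤ W → W ≤ V → ρ W + finrank F V ≤ ρ V + finrank F W from
    this _ le_rfl (cyc_le V)
  intro W
  induction W using WellFoundedGT.induction with
  | _ W ih =>
  intro hcW hWV
  obtain rfl | hlt := hWV.eq_or_lt
  · exact le_rfl
  obtain ⟨x, hxV, hxW⟩ := SetLike.exists_of_lt hlt
  have hstep : ρ (W ⊔ span F {x}) = ρ W + 1 := (hρ.rk_sup_span_eq_or W x).resolve_left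
    fun h => hxW (mem_of_rk_sup_span_eq hρ hcW hWV hxV h)
  have := ih _ (left_lt_sup.mpr fun h => hxW ((span_singleton_le_iff_mem x W).mp h))
    (hcW.trans le_sup_left) (sup_le hWV ((span_singleton_le_iff_mem x V).mpr hxV))
  rw [hstep, finrank_sup_span_singleton hxW] at this
  omega

end Circuits

end

variable {F E : Type*} [Field F] [Fintype F] [AddCommGroup E] [Module F E]
  [FiniteDimensional F E]

theorem stmt7 (ρ : Submodule F E → ℕ) (hρ : IsRkFn F ρ)
    (Z₁ Z₂ : Submodule F E) (h₁ : CyclicFlat ρ Z₁) (h₂ : CyclicFlat ρ Z₂) :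
    CyclicFlat ρ (cyc ρ (Z₁ ⊓ Z₂)) ∧ CyclicFlat ρ (cl ρ (Z₁ ⊔ Z₂)) ∧
    -- `cyc (Z₁ ⊓ Z₂)` is the meet of `Z₁` and `Z₂` in the poset of cyclic flats
    (cyc ρ (Z₁ ⊓ Z₂) ≤ Z₁ ∧ cyc ρ (Z₁ ⊓ Z₂) ≤ Z₂ ∧
      ∀ W : Submodule F E, CyclicFlat ρ W → W ≤ Z₁ → W ≤ Z₂ → W ≤ cyc ρ (Z₁ ⊓ Z₂)) ∧
    -- `cl (Z₁ ⊔ Z₂)` is the join of `Z₁` and `Z₂` in the poset of cyclic flats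
    (Z₁ ≤ cl ρ (Z₁ ⊔ Z₂) ∧ Z₂ ≤ cl ρ (Z₁ ⊔ Z₂) ∧
      ∀ W : Submodule F E, CyclicFlat ρ W → Z₁ ≤ W → Z₂ ≤ W → cl ρ (Z₁ ⊔ Z₂) ≤ W) ∧
    -- rank values of the join and the meet
    ρ (cl ρ (Z₁ ⊔ Z₂)) = ρ (Z₁ ⊔ Z₂) ∧
    ρ (cyc ρ (Z₁ ⊓ Z₂)) =
      ρ (Z₁ ⊓ Z₂) - (finrank F ↥(Z₁ ⊓ Z₂) - finrank F ↥(cyc ρ (Z₁ ⊓ Z₂))) ∧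
    ρ (cl ρ (Z₁ ⊔ Z₂)) + ρ (cyc ρ (Z₁ ⊓ Z₂)) +
        (finrank F ↥(Z₁ ⊓ Z₂) - finrank F ↥(cyc ρ (Z₁ ⊓ Z₂))) ≤ ρ Z₁ + ρ Z₂ := by
  have hcyc := rk_add_finrank_cyc hρ (Z₁ ⊓ Z₂)
  have hdim : finrank F ↥(cyc ρ (Z₁ ⊓ Z₂)) ≤ finrank F ↥(Z₁ ⊓ Z₂) :=
    Submodule.finrank_mono (cyc_le _)
  have hcl := rk_cl hρ (Z₁ ⊔ Z₂)
  have hsub := hρ.submodular Z₁ Z₂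
  refine ⟨⟨(h₁.1.inf hρ h₂.1).cyc hρ, isOpenSp_cyc _⟩,
    ⟨isFlat_cl hρ _, (h₁.2.sup h₂.2).cl hρ⟩,
    ⟨(cyc_le _).trans inf_le_left, (cyc_le _).trans inf_le_right,
      fun W hW hW₁ hW₂ => hW.2.le_cyc (le_inf hW₁ hW₂)⟩,
    ⟨le_sup_left.trans (le_cl hρ _), le_sup_right.trans (le_cl hρ _),
      fun W hW hW₁ hW₂ => cl_le_of_isFlat hρ (sup_le hW₁ hW₂) hW.1⟩,
    hcl, by omega, by omega⟩

end QM
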